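/- arXiv:2009.08145 — 4 statements merged into one kernel-verified Lean document; each statement's English description precedes it below -/
import Mathlib

section
/- Let 𝔉 be a saturated formation and let G be a finite group. If G has no non-trivial normal 𝔉-central subgroup (equivalently, Z_𝔉(G) = 1), then G^𝔉 is a large subgroup of G, i.e. C_G(G^𝔉) ≤ G^𝔉. -/
/-- A class of finite groups. -/
def GroupClass : Type 1 :=
  ∀ (G : Type) [Group G] [Finite G], Prop

instance SemidirectProduct.instFinite {N G : Type*} [Group N] [Group G] [Finite N] [Finite G]
    (φ : G →* MulAut N) : Finite (N ⋊[φ] G) :=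
  Finite.of_injective (fun x => (x.left, x.right)) (by
    rintro ⟨a, b⟩ ⟨c, d⟩ h
    simpa [Prod.ext_iff, SemidirectProduct.ext_iff] using h)

/-- The `F`-residual of a finite group `G`. -/
def GroupClass.residual (F : GroupClass) (G : Type) [Group G] [Finite G] : Subgroup G :=
  sInf {N : Subgroup G | ∃ _ : N.Normal, F (G ⧸ N)}

/-- `F` is a formation. -/
structure GroupClass.IsFormation (F : GroupClass) : Prop where
  nonempty : ∃ (G : Type) (_ : Group G) (_ : Finite G), F G
  isoClosed : ∀ (G H : Type) [Group G] [Finite G] [Group H] [Finite H],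
    (G ≃* H) → F G → F H
  quot_residual_mem : ∀ (G : Type) [Group G] [Finite G] (N : Subgroup G) (_ : N.Normal),
    F.residual G ≤ N → F (G ⧸ N)

/-- `F` is hereditary (subgroup-closed). -/
def GroupClass.Hereditary (F : GroupClass) : Prop :=
  ∀ (G : Type) [Group G] [Finite G], F G → ∀ H : Subgroup G, F H

/-- `F` is saturated. -/
def GroupClass.Saturated (F : GroupClass) : Prop :=
  ∀ (G : Type) [Group G] [Finite G], F.residual G ≤ frattini G → F G

section SectionMachinery

variable {G : Type} [Group G]

/-- conjugation by `g` preserves `S.subgroupOf R` when `R, S` are normal. -/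
theorem conj_map_subgroupOf (R S : Subgroup G) [hR : R.Normal] [hS : S.Normal] (g : G) :
    (S.subgroupOf R).map ((MulAut.conjNormal g : MulAut R) : R →* R) = S.subgroupOf R := by
  ext x
  simp only [Subgroup.mem_map, Subgroup.mem_subgroupOf]
  constructor
  · rintro ⟨y, hy, rfl⟩
    simpa [MulAut.conjNormal_apply] using hS.conj_mem _ hy g
  · intro hx
    refine ⟨(MulAut.conjNormal g).symm x, ?_, by simp⟩
    simp only [Subgroup.mem_subgroupOf, MulAut.conjNormal_symm_apply]
    simpa using hS.conj_mem _ hx g⁻¹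

/-- The conjugation action of `G` on the normal section `R/S`. -/
def secAction (R S : Subgroup G) [R.Normal] [S.Normal] :
    G →* MulAut (R ⧸ S.subgroupOf R) where
  toFun g := QuotientGroup.congr (S.subgroupOf R) (S.subgroupOf R)
      (MulAut.conjNormal g) (conj_map_subgroupOf R S g)
  map_one' := by
    ext x
    induction x using QuotientGroup.induction_on with
    | H r => simp [QuotientGroup.congr_mk]
  map_mul' g₁ g₂ := by
    ext x
    induction x using QuotientGroup.induction_on with
    | H r => simp [QuotientGroup.congr_mk, map_mul]

/-- The centraliser in `G` of the normal section `R/S`. -/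
def secCentralizer (R S : Subgroup G) [R.Normal] [S.Normal] : Subgroup G :=
  (secAction R S).ker

instance secCentralizer.normal (R S : Subgroup G) [R.Normal] [S.Normal] :
    (secCentralizer R S).Normal := MonoidHom.normal_ker _

/-- The semidirect product `[R/S](G/K)` for a normal subgroup `K ≤ C_G(R/S)`. -/
abbrev secSDP (R S K : Subgroup G) [R.Normal] [S.Normal] [K.Normal]
    (hK : K ≤ secCentralizer R S) : Type :=
  (R ⧸ S.subgroupOf R) ⋊[QuotientGroup.lift K (secAction R S) (fun _ hx => hK hx)] (G ⧸ K)

end SectionMachinery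

/-- The normal section `R/S` of `G` is `F`-central in `G`. -/
def FCentralSection (F : GroupClass) {G : Type} [Group G] [Finite G]
    (R S : Subgroup G) [R.Normal] [S.Normal] : Prop :=
  ∃ (K : Subgroup G) (hK : K.Normal),
    haveI := hK
    ∃ hle : K ≤ secCentralizer R S, F (secSDP R S K hle)

/-- `H/K` is a chief factor of `G`. -/
def IsChiefFactor {G : Type} [Group G] (H K : Subgroup G) : Prop :=
  H.Normal ∧ K.Normal ∧ K < H ∧
    ∀ L : Subgroup G, L.Normal → K ≤ L → L ≤ H → L = K ∨ L = H

/-- A normal subgroup `N` of `G` is `F`-hypercentral in `G`: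
every chief factor of `G` below `N` is `F`-central in `G`. -/
def FHypercentralIn (F : GroupClass) {G : Type} [Group G] [Finite G] (N : Subgroup G) : Prop :=
  N.Normal ∧ ∀ H K : Subgroup G, ∀ hcf : IsChiefFactor H K, H ≤ N →
    @FCentralSection F G _ _ H K hcf.1 hcf.2.1

/-- The `F`-hypercentre of `G`: the product of all `F`-hypercentral normal subgroups. -/
def FHypercentre (F : GroupClass) (G : Type) [Group G] [Finite G] : Subgroup G :=
  ⨆ (N : Subgroup G) (_ : FHypercentralIn F N), N

/-- `A` is `K`-`F`-subnormal in `G`. -/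
def KFSubnormalIn (F : GroupClass) {G : Type} [Group G] [Finite G] (A : Subgroup G) : Prop :=
  ∃ (n : ℕ) (c : ℕ → Subgroup G), c 0 = A ∧ c n = ⊤ ∧
    ∀ i < n, c i ≤ c (i + 1) ∧
      (((c i).subgroupOf (c (i + 1))).Normal ∨
        F ((c (i + 1)) ⧸ ((c i).subgroupOf (c (i + 1))).normalCore))

/-! Write `D = G^𝔉` and suppose `C_G(D) ⊄ D`. Choose `A ⊴ G` minimal with `A ≤ C_G(D)` and
`A ⊄ D`, and put `X = [A](G/D)`. The projection `(a, gD) ↦ gD` and the multiplication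
`(a, gD) ↦ agD` both map `X` onto `G/D ∈ 𝔉`, and their kernels meet in `N = A ∩ D`, so
`X^𝔉 ≤ N`. Inside `X`, `N` is central in `A`, and `A` is minimal among the normal subgroups
of `X` not contained in `N`. If a maximal subgroup `U` of `X` missed `N`, then `NU = X`, so
`A ∩ U` would be normal in `X`; but it is neither `A` nor (by Dedekind's law) inside `N`.
Hence `X^𝔉 ≤ N ≤ Φ(X)`, saturation gives `X ∈ 𝔉`, and `A ≠ 1` is a normal `𝔉`-central
subgroup of `G`. -/
namespace GroupClass

instance normal_residual (F : GroupClass) (G : Type) [Group G] [Finite G] :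
    (F.residual G).Normal where
  conj_mem n hn g := by
    simp only [residual, Subgroup.mem_sInf] at hn ⊢
    rintro N ⟨hN, hFN⟩
    exact hN.conj_mem n (hn N ⟨hN, hFN⟩) g

theorem IsFormation.residual_le_ker {F : GroupClass} (hF : F.IsFormation)
    {X W : Type} [Group X] [Finite X] [Group W] [Finite W] {f : X →* W}
    (hf : Function.Surjective f) (hW : F W) : F.residual X ≤ f.ker :=
  sInf_le ⟨f.normal_ker, hF.isoClosed W _ (QuotientGroup.quotientKerEquivOfSurjective f hf).symm hW⟩

end GroupClass

namespace Subgroup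

variable {X : Type*} [Group X]

theorem inf_normal_of_le_centralizer_of_sup_eq_top {L N U : Subgroup X} [L.Normal]
    (hNL : N ≤ centralizer L) (hNU : N ⊔ U = ⊤) : (L ⊓ U).Normal := by
  rw [← normalizer_eq_top_iff, eq_top_iff, ← hNU]
  refine sup_le (hNL.trans ((centralizer_le inf_le_left).trans (centralizer_le_normalizer _))) ?_
  exact (le_inf le_normalizer_of_normal le_normalizer).trans inf_normalizer_le_normalizer_inf

theorem le_frattini_of_le_centralizer_of_minimal {L N : Subgroup X} [L.Normal] [N.Normal]
    (hNL : N ≤ L) (hNC : N ≤ centralizer L) (hLN : ¬ L ≤ N)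
    (hmin : ∀ B : Subgroup X, B.Normal → B ≤ L → B ≤ N ∨ B = L) : N ≤ frattini X := by
  refine le_iInf₂ fun U (hU : IsCoatom U) => ?_
  by_contra hNU
  have hsup : N ⊔ U = ⊤ := hU.2 _ (right_lt_sup.mpr hNU)
  have hLU := inf_normal_of_le_centralizer_of_sup_eq_top (L := L) hNC hsup
  rcases hmin (L ⊓ U) hLU inf_le_left with hle | heq
  · refine hLN fun l hl => ?_
    obtain ⟨n, hn, u, hu, rfl⟩ := mem_sup_of_normal_left.mp (hsup ▸ mem_top l : l ∈ N ⊔ U)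
    have hu' : u ∈ L ⊓ U := ⟨(mul_mem_cancel_left (hNL hn)).mp hl, hu⟩
    exact mul_mem hn (hle hu')
  · exact hNU (hNL.trans (heq ▸ inf_le_right))

end Subgroup

section SectionSemidirect

open Subgroup QuotientGroup SemidirectProduct

variable {G : Type} [Group G]

@[simp]
theorem secAction_apply_mk (R S : Subgroup G) [R.Normal] [S.Normal] (g : G) (r : R) :
    secAction R S g (r : R ⧸ S.subgroupOf R) = (MulAut.conjNormal g r : R ⧸ S.subgroupOf R) := by
  simp [secAction, congr_mk]

theorem centralizer_le_secCentralizer (R S : Subgroup G) [R.Normal] [S.Normal] :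
    centralizer (R : Set G) ≤ secCentralizer R S := by
  intro c hc
  refine MonoidHom.mem_ker.mpr (MulEquiv.ext fun q => ?_)
  induction q using QuotientGroup.induction_on with
  | H r =>
    rw [secAction_apply_mk, MulAut.one_apply]
    congr 1
    ext
    simp [MulAut.conjNormal_apply, ← mem_centralizer_iff.mp hc r r.2]

variable {R S K : Subgroup G} [R.Normal] [S.Normal] [K.Normal]

def secInl (hK : K ≤ secCentralizer R S) : R →* secSDP R S K hK :=
  inl.comp (mk' _)

theorem range_secInl (hK : K ≤ secCentralizer R S) : (secInl hK).range = rightHom.ker := by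
  rw [secInl, MonoidHom.range_comp, range_mk', ← MonoidHom.range_eq_map, range_inl_eq_ker_rightHom]

@[simp]
theorem rightHom_secInl (hK : K ≤ secCentralizer R S) (r : R) : rightHom (secInl hK r) = 1 :=
  rightHom_inl _

theorem inr_mul_secInl_mul_inr_inv (hK : K ≤ secCentralizer R S) (g : G) (r : R) :
    inr (g : G ⧸ K) * secInl hK r * (inr (g : G ⧸ K))⁻¹ = secInl hK (MulAut.conjNormal g r) := by
  simp only [secInl, MonoidHom.coe_comp, Function.comp_apply]
  rw [← map_inv, ← inl_aut]
  exact congrArg inl (secAction_apply_mk R S g r)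

theorem normal_map_comap_secInl (hK : K ≤ secCentralizer R S)
    {B : Subgroup (secSDP R S K hK)} [hB : B.Normal] :
    ((B.comap (secInl hK)).map R.subtype).Normal where
  conj_mem _ := by
    rintro ⟨r, hr, rfl⟩ g
    refine ⟨MulAut.conjNormal g r, ?_, rfl⟩
    show secInl hK _ ∈ B
    rw [← inr_mul_secInl_mul_inr_inv]
    exact hB.conj_mem _ hr _

def secMulQuot (hK : K ≤ secCentralizer R S) (hSK : S ≤ K) : secSDP R S K hK →* G ⧸ K :=
  lift (QuotientGroup.lift _ ((mk' K).comp R.subtype) fun r hr => by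
      simpa [eq_one_iff] using hSK (mem_subgroupOf.mp hr))
    (MonoidHom.id _) fun x => by
      induction x using QuotientGroup.induction_on with
      | H g =>
        refine MonoidHom.ext fun q => ?_
        induction q using QuotientGroup.induction_on with
        | H r => rfl

@[simp]
theorem secMulQuot_secInl (hK : K ≤ secCentralizer R S) (hSK : S ≤ K) (r : R) :
    secMulQuot hK hSK (secInl hK r) = (r : G ⧸ K) := by
  simp [secMulQuot, secInl]

theorem secMulQuot_surjective (hK : K ≤ secCentralizer R S) (hSK : S ≤ K) :
    Function.Surjective (secMulQuot hK hSK) :=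
  fun x => ⟨inr x, by simp [secMulQuot]⟩

end SectionSemidirect

open Subgroup SemidirectProduct in
theorem secSDP_mem_of_minimal {F : GroupClass} (hF : F.IsFormation) (hSat : F.Saturated)
    {G : Type} [Group G] [Finite G] {R S D : Subgroup G} [R.Normal] [S.Normal] [D.Normal]
    (hSD : S ≤ D) (hGD : F (G ⧸ D)) (hRD : R ≤ centralizer (D : Set G)) (hRnD : ¬ R ≤ D)
    (hmin : ∀ B : Subgroup G, B.Normal → B ≤ R → ¬ B ≤ D → B = R)
    (hD : D ≤ secCentralizer R S) : F (secSDP R S D hD) := by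
  let ι := secInl hD
  let N := rightHom.ker ⊓ (secMulQuot hD hSD).ker
  have hιL (y) (hy : y ∈ rightHom.ker) : ∃ r, ι r = y := by rwa [← range_secInl] at hy
  have hιN (r : R) : ι r ∈ N ↔ (r : G) ∈ D := by
    simp [N, ι, QuotientGroup.eq_one_iff]
  have hres : F.residual _ ≤ N :=
    le_inf (hF.residual_le_ker rightHom_surjective hGD)
      (hF.residual_le_ker (secMulQuot_surjective hD hSD) hGD)
  refine hSat _ (hres.trans
    (le_frattini_of_le_centralizer_of_minimal inf_le_left ?central ?proper ?minimal))
  case central =>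
    intro y hy
    obtain ⟨d, rfl⟩ := hιL y hy.1
    refine mem_centralizer_iff.mpr fun z hz => ?_
    obtain ⟨r, rfl⟩ := hιL z hz
    rw [← map_mul, ← map_mul]
    exact congrArg ι (Subtype.ext (mem_centralizer_iff.mp (hRD r.2) d ((hιN d).mp hy)).symm)
  case proper =>
    obtain ⟨r, hr, hrD⟩ := SetLike.not_le_iff_exists.mp hRnD
    exact fun hLN => hrD ((hιN ⟨r, hr⟩).mp (hLN (rightHom_secInl hD _)))
  case minimal =>
    intro B hB hBL
    -- `B` is the image of its preimage in `R`, which is normal in `G`.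
    by_cases hBD : (B.comap ι).map R.subtype ≤ D
    · left
      intro y hy
      obtain ⟨r, rfl⟩ := hιL y (hBL hy)
      exact (hιN r).mpr (hBD ⟨r, hy, rfl⟩)
    · right
      refine le_antisymm hBL fun y hy => ?_
      obtain ⟨r, rfl⟩ := hιL y hy
      have hr : (r : G) ∈ (B.comap ι).map R.subtype :=
        (hmin _ (normal_map_comap_secInl hD) (map_subtype_le _) hBD).symm ▸ r.2
      obtain ⟨r', hr', hrr'⟩ := hr
      rwa [← Subtype.ext hrr']

/-- **Theorem B.** Let `𝔉` be a saturated formation. If the finite group `G` has no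
non-trivial normal `𝔉`-central subgroup then `G^𝔉` is a large subgroup of `G`,
i.e. `C_G(G^𝔉) ≤ G^𝔉`. -/
theorem centralizer_residual_le_of_no_FCentral
    (F : GroupClass) (hF : F.IsFormation) (hSat : F.Saturated)
    {G : Type} [Group G] [Finite G]
    (hZ : ∀ N : Subgroup G, ∀ hN : N.Normal,
      @FCentralSection F G _ _ N ⊥ hN inferInstance → N = ⊥) :
    Subgroup.centralizer ((F.residual G : Subgroup G) : Set G) ≤ F.residual G := by
  set D := F.residual G
  by_contra hCD
  obtain ⟨A, -, hAmin⟩ := exists_minimal_le_of_wellFoundedLT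
    (fun B : Subgroup G => B.Normal ∧ B ≤ Subgroup.centralizer (D : Set G) ∧ ¬ B ≤ D) _
    ⟨inferInstance, le_rfl, hCD⟩
  obtain ⟨hA, hAC, hAD⟩ := hAmin.prop
  have hle : D ≤ secCentralizer A ⊥ :=
    (Subgroup.le_centralizer_iff.mp hAC).trans (centralizer_le_secCentralizer A ⊥)
  have hFA : F (secSDP A ⊥ D hle) :=
    secSDP_mem_of_minimal hF hSat bot_le (hF.quot_residual_mem G D inferInstance le_rfl) hAC hAD
      (fun B hB hBA hBD => hAmin.eq_of_le ⟨hB, hBA.trans hAC, hBD⟩ hBA) hle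
  exact hAD ((hZ A hA ⟨D, inferInstance, hle, hFA⟩).symm ▸ bot_le)
end

section
/- Let 𝔉 be a hereditary formation, G a finite group, R/S an 𝔉-central normal section of G, and K ≤ L normal subgroups of G such that L ≤ C_G(R/S) and [R/S](G/K) ∈ 𝔉. Then [R/S](G/L) ∈ 𝔉. -/
theorem GroupClass.mem_of_surjective (F : GroupClass) (hF : F.IsFormation)
    {G H : Type} [Group G] [Finite G] [Group H] [Finite H]
    (f : G →* H) (hsurj : Function.Surjective f) (hG : F G) : F H := by
  have h1 : F (G ⧸ (⊥ : Subgroup G)) :=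
    hF.isoClosed G _ (QuotientGroup.quotientBot (G := G)).symm hG
  have hres : F.residual G ≤ ⊥ := sInf_le ⟨inferInstance, h1⟩
  have h2 : F (G ⧸ f.ker) :=
    hF.quot_residual_mem G f.ker inferInstance (hres.trans bot_le)
  exact hF.isoClosed _ H (QuotientGroup.quotientKerEquivOfSurjective f hsurj) h2

/-- **Lemma 2(i).** Let `𝔉` be a hereditary formation, `R/S` an `𝔉`-central normal
section of the finite group `G`, and `K ≤ L` normal subgroups of `G` with
`L ≤ C_G(R/S)` and `[R/S](G/K) ∈ 𝔉`. Then `[R/S](G/L) ∈ 𝔉`. -/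
theorem secSDP_mem_of_quotient_larger
    (F : GroupClass) (hF : F.IsFormation) (hHer : F.Hereditary)
    {G : Type} [Group G] [Finite G]
    (R S K L : Subgroup G) [R.Normal] [S.Normal] [K.Normal] [L.Normal]
    (hSR : S ≤ R) (hKL : K ≤ L) (hLC : L ≤ secCentralizer R S)
    (hcent : FCentralSection F R S)
    (hmem : F (secSDP R S K (hKL.trans hLC))) :
    F (secSDP R S L hLC) := by
  classical
  let f : secSDP R S K (hKL.trans hLC) →* secSDP R S L hLC :=
    SemidirectProduct.map (MonoidHom.id _) (QuotientGroup.map K L (MonoidHom.id G) hKL)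
      (by
        intro g
        induction g using QuotientGroup.induction_on with
        | H x =>
          ext n
          rfl)
  have hsurj : Function.Surjective f := by
    rintro ⟨n, g⟩
    induction g using QuotientGroup.induction_on with
    | H x => exact ⟨⟨n, QuotientGroup.mk x⟩, rfl⟩
  exact F.mem_of_surjective hF f hsurj hmem
end

section
/- Let 𝔉 be a hereditary formation, G a finite group, and R/S an 𝔉-central normal section of G. Then for every subgroup E of G, the normal section (E ∩ R)/(E ∩ S) of E is 𝔉-central in E. -/
/-!
Pull everything back along an arbitrary homomorphism `φ : H →* G` (for the theorem, the inclusion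
of `E`). The section `φ⁻¹R / φ⁻¹S` of `H` embeds `φ`-equivariantly into `R / S`, and `H / φ⁻¹K`
embeds into `G / K`; by injectivity and equivariance `φ⁻¹K` centralises `φ⁻¹R / φ⁻¹S`, and the two
embeddings assemble into an embedding of `[φ⁻¹R / φ⁻¹S](H / φ⁻¹K)` into `[R / S](G / K) ∈ 𝔉`.
Heredity and closure under isomorphism finish the proof.
-/

theorem SemidirectProduct.map_injective {N₁ G₁ N₂ G₂ : Type*} [Group N₁] [Group G₁] [Group N₂]
    [Group G₂] {φ₁ : G₁ →* MulAut N₁} {φ₂ : G₂ →* MulAut N₂} {fn : N₁ →* N₂} {fg : G₁ →* G₂}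
    (hfn : Function.Injective fn) (hfg : Function.Injective fg)
    (h : ∀ g : G₁, fn.comp (φ₁ g).toMonoidHom = (φ₂ (fg g)).toMonoidHom.comp fn) :
    Function.Injective (SemidirectProduct.map fn fg h) := fun _ _ hxy =>
  SemidirectProduct.ext (hfn (congrArg SemidirectProduct.left hxy))
    (hfg (congrArg SemidirectProduct.right hxy))

theorem QuotientGroup.map_injective_of_eq_comap {G H : Type*} [Group G] [Group H]
    {N : Subgroup G} [N.Normal] {M : Subgroup H} [M.Normal] (f : G →* H) (h : N = M.comap f) :
    Function.Injective (QuotientGroup.map N M f h.le) := by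
  rw [← MonoidHom.ker_eq_bot_iff, QuotientGroup.ker_map, ← h, QuotientGroup.map_mk'_self]

def GroupClass.IsoClosed (F : GroupClass) : Prop :=
  ∀ (G H : Type) [Group G] [Finite G] [Group H] [Finite H], (G ≃* H) → F G → F H

theorem GroupClass.Hereditary.of_injective {F : GroupClass} (hHer : F.Hereditary)
    (hiso : F.IsoClosed) {G H : Type} [Group G] [Finite G] [Group H] [Finite H] {f : H →* G}
    (hf : Function.Injective f) (hG : F G) : F H :=
  hiso _ _ (MonoidHom.ofInjective hf).symm (hHer G hG f.range)

section SectionComap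

variable {G H : Type} [Group G] [Group H] (φ : H →* G) (R S : Subgroup G) [S.Normal]

def secComap :
    R.comap φ ⧸ (S.comap φ).subgroupOf (R.comap φ) →* R ⧸ S.subgroupOf R :=
  QuotientGroup.map _ _ (φ.subgroupComap R) le_rfl

theorem secComap_injective : Function.Injective (secComap φ R S) :=
  QuotientGroup.map_injective_of_eq_comap _ (by ext; rfl)

theorem secComap_secAction [R.Normal] (h : H)
    (x : R.comap φ ⧸ (S.comap φ).subgroupOf (R.comap φ)) :
    secComap φ R S (secAction (R.comap φ) (S.comap φ) h x) =
      secAction R S (φ h) (secComap φ R S x) := by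
  induction x using QuotientGroup.induction_on with
  | H r =>
    show QuotientGroup.mk _ = QuotientGroup.mk _
    congr 1
    ext
    change φ (h * r * h⁻¹) = φ h * φ r * (φ h)⁻¹
    simp only [map_mul, map_inv]

theorem comap_le_secCentralizer [R.Normal] {K : Subgroup G} (hK : K ≤ secCentralizer R S) :
    K.comap φ ≤ secCentralizer (R.comap φ) (S.comap φ) := fun h hh => by
  change secAction _ _ h = 1
  ext x
  apply secComap_injective φ R S
  rw [secComap_secAction, show secAction R S (φ h) = 1 from hK hh]
  rfl

def secSDPComap [R.Normal] (K : Subgroup G) [K.Normal] (hK : K ≤ secCentralizer R S) :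
    secSDP (R.comap φ) (S.comap φ) (K.comap φ) (comap_le_secCentralizer φ R S hK) →*
      secSDP R S K hK :=
  SemidirectProduct.map (secComap φ R S) (QuotientGroup.map _ _ φ le_rfl) fun g => by
    induction g using QuotientGroup.induction_on with
    | H h => exact MonoidHom.ext (secComap_secAction φ R S h)

theorem secSDPComap_injective [R.Normal] (K : Subgroup G) [K.Normal]
    (hK : K ≤ secCentralizer R S) :
    Function.Injective (secSDPComap φ R S K hK) :=
  SemidirectProduct.map_injective (secComap_injective φ R S)
    (QuotientGroup.map_injective_of_eq_comap φ rfl) _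

end SectionComap

theorem FCentralSection.comap {F : GroupClass} (hiso : F.IsoClosed) (hHer : F.Hereditary)
    {G H : Type} [Group G] [Finite G] [Group H] [Finite H] (φ : H →* G)
    {R S : Subgroup G} [R.Normal] [S.Normal] (hRS : FCentralSection F R S) :
    FCentralSection F (R.comap φ) (S.comap φ) := by
  obtain ⟨K, _, hK, hFK⟩ := hRS
  exact ⟨K.comap φ, inferInstance, comap_le_secCentralizer φ R S hK,
    hHer.of_injective hiso (secSDPComap_injective φ R S K hK) hFK⟩

theorem FCentralSection_subgroupOf_general
    (F : GroupClass) (hF : F.IsFormation) (hHer : F.Hereditary)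
    {G : Type} [Group G] [Finite G]
    (R S : Subgroup G) [R.Normal] [S.Normal]
    (hcent : FCentralSection F R S) (E : Subgroup G) :
    FCentralSection F (R.subgroupOf E) (S.subgroupOf E) :=
  hcent.comap hF.isoClosed hHer E.subtype

/-- **Lemma 2(ii).** Let `𝔉` be a hereditary formation and `R/S` an `𝔉`-central
normal section of the finite group `G`. Then for every subgroup `E` of `G`, the
normal section `(E ∩ R)/(E ∩ S)` of `E` is `𝔉`-central in `E`. -/
theorem FCentralSection_subgroupOf
    (F : GroupClass) (hF : F.IsFormation) (hHer : F.Hereditary)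
    {G : Type} [Group G] [Finite G]
    (R S : Subgroup G) [R.Normal] [S.Normal] (hSR : S ≤ R)
    (hcent : FCentralSection F R S) (E : Subgroup G) :
    FCentralSection F (R.subgroupOf E) (S.subgroupOf E) :=
  FCentralSection_subgroupOf_general F hF hHer R S hcent E
end

section
/- Let 𝔉 be a hereditary formation, G a finite group, and N a normal subgroup of G with N ≤ Z_𝔉(G). Then Z_𝔉(G)/N = Z_𝔉(G/N). -/
namespace GroupClass.IsFormation

variable {F : GroupClass} (hF : F.IsFormation)
include hF

theorem quotient_mem {G : Type} [Group G] [Finite G] (h : F G) (N : Subgroup G) [N.Normal] :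
    F (G ⧸ N) := by
  refine hF.quot_residual_mem G N ‹_› (le_trans ?_ bot_le)
  exact sInf_le ⟨inferInstance, hF.isoClosed G _ (QuotientGroup.quotientBot (G := G)).symm h⟩

theorem of_surjective {G H : Type} [Group G] [Finite G] [Group H] [Finite H] (f : G →* H)
    (hf : Function.Surjective f) (h : F G) : F H :=
  hF.isoClosed _ _ (QuotientGroup.quotientKerEquivOfSurjective f hf) (hF.quotient_mem h f.ker)

theorem mem_iff_of_mulEquiv {G H : Type} [Group G] [Finite G] [Group H] [Finite H]
    (e : G ≃* H) : F G ↔ F H :=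
  ⟨hF.isoClosed _ _ e, hF.isoClosed _ _ e.symm⟩

end GroupClass.IsFormation

section NormalSection

variable {G G' : Type} [Group G] [Group G']

theorem secAction_mk (R S : Subgroup G) [R.Normal] [S.Normal] (g : G) (r : R) :
    secAction R S g (r : R ⧸ S.subgroupOf R) = (MulAut.conjNormal g r : R) :=
  QuotientGroup.congr_mk _ _ _ (conj_map_subgroupOf R S g) r

theorem mem_secCentralizer_iff {R S : Subgroup G} [R.Normal] [S.Normal] {g : G} :
    g ∈ secCentralizer R S ↔ ∀ x : R ⧸ S.subgroupOf R, secAction R S g x = x := by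
  rw [secCentralizer, MonoidHom.mem_ker, MulEquiv.ext_iff]
  rfl

variable [Finite G] [Finite G']

theorem fCentralSection_iff_centralizer {F : GroupClass} (hF : F.IsFormation)
    (R S : Subgroup G) [R.Normal] [S.Normal] :
    FCentralSection F R S ↔ F (secSDP R S (secCentralizer R S) le_rfl) := by
  refine ⟨fun ⟨K, _, hKC, hK⟩ => ?_, fun h => ⟨_, inferInstance, le_rfl, h⟩⟩
  refine hF.of_surjective (SemidirectProduct.map (MonoidHom.id _)
    (QuotientGroup.map K _ (MonoidHom.id G) hKC) fun g => ?_) ?_ hK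
  · induction g using QuotientGroup.induction_on
    rfl
  · rintro ⟨x, q⟩
    obtain ⟨g, rfl⟩ := QuotientGroup.mk_surjective q
    exact ⟨⟨x, g⟩, rfl⟩

theorem fCentralSection_iff_of_equivariant {F : GroupClass} (hF : F.IsFormation)
    {π : G →* G'} (hπ : Function.Surjective π) {R S : Subgroup G} {R' S' : Subgroup G'}
    [R.Normal] [S.Normal] [R'.Normal] [S'.Normal]
    (e : R ⧸ S.subgroupOf R ≃* R' ⧸ S'.subgroupOf R')
    (he : ∀ g x, e (secAction R S g x) = secAction R' S' (π g) (e x)) :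
    FCentralSection F R S ↔ FCentralSection F R' S' := by
  have hC : (secCentralizer R' S').comap π = secCentralizer R S := by
    ext g
    simp only [Subgroup.mem_comap, mem_secCentralizer_iff, e.surjective.forall, ← he,
      e.injective.eq_iff]
  let fC : G ⧸ secCentralizer R S ≃* G' ⧸ secCentralizer R' S' :=
    (QuotientGroup.quotientMulEquivOfEq
        (by rw [← MonoidHom.comap_ker, QuotientGroup.ker_mk', hC])).trans
      (QuotientGroup.quotientKerEquivOfSurjective ((QuotientGroup.mk' _).comp π)
        ((QuotientGroup.mk'_surjective _).comp hπ))
  rw [fCentralSection_iff_centralizer hF, fCentralSection_iff_centralizer hF]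
  refine hF.mem_iff_of_mulEquiv (SemidirectProduct.congr e fC fun g => ?_)
  induction g using QuotientGroup.induction_on
  ext x
  exact he _ x

theorem fCentralSection_iff_of_surjective {F : GroupClass} (hF : F.IsFormation)
    {π : G →* G'} (hπ : Function.Surjective π) {R S : Subgroup G} {R' S' : Subgroup G'}
    [R.Normal] [S.Normal] [R'.Normal] [S'.Normal] (hR : R.map π ≤ R') (hR' : R' ≤ R.map π ⊔ S')
    (hS : (S'.comap π).subgroupOf R = S.subgroupOf R) :
    FCentralSection F R S ↔ FCentralSection F R' S' := by
  let ψ : R →* R' ⧸ S'.subgroupOf R' :=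
    (QuotientGroup.mk' _).comp ((Subgroup.inclusion hR).comp (π.subgroupMap R))
  have hψ : Function.Surjective ψ := by
    intro y
    obtain ⟨⟨x, hx⟩, rfl⟩ := QuotientGroup.mk_surjective y
    obtain ⟨_, ⟨r, hr, rfl⟩, s, hs, rfl⟩ := Subgroup.mem_sup_of_normal_right.mp (hR' hx)
    refine ⟨⟨r, hr⟩, (QuotientGroup.eq).mpr ?_⟩
    simpa [Subgroup.mem_subgroupOf] using hs
  have hker : ψ.ker = S.subgroupOf R := by
    rw [← hS]
    ext r
    simp [ψ, Subgroup.mem_subgroupOf]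
  let e := (QuotientGroup.quotientMulEquivOfEq hker.symm).trans
    (QuotientGroup.quotientKerEquivOfSurjective ψ hψ)
  refine fCentralSection_iff_of_equivariant hF hπ e fun g x => ?_
  induction x using QuotientGroup.induction_on with
  | H r =>
    change ψ _ = secAction R' S' (π g) (ψ r)
    simp only [ψ, MonoidHom.comp_apply, QuotientGroup.mk'_apply, secAction_mk]
    congr 1
    ext
    simp [MulAut.conjNormal_apply]

theorem fCentralSection_iff_of_sup_eq_of_inf_eq {F : GroupClass} (hF : F.IsFormation)
    {A B C D : Subgroup G} [A.Normal] [B.Normal] [C.Normal] [D.Normal]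
    (hC : A ⊔ B = C) (hD : A ⊓ B = D) : FCentralSection F A D ↔ FCentralSection F C B :=
  fCentralSection_iff_of_surjective hF (π := MonoidHom.id G) Function.surjective_id
    (by rw [Subgroup.map_id, ← hC]; exact le_sup_left) (by rw [Subgroup.map_id, hC])
    (by rw [Subgroup.comap_id, ← hD, Subgroup.inf_subgroupOf_left])

theorem fCentralSection_iff_of_map_eq {F : GroupClass} (hF : F.IsFormation)
    {π : G →* G'} (hπ : Function.Surjective π) {R S : Subgroup G} {R' S' : Subgroup G'}
    [R.Normal] [S.Normal] [R'.Normal] [S'.Normal] (hR : R.map π = R') (hS : S.map π = S')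
    (hker : π.ker ≤ S) : FCentralSection F R S ↔ FCentralSection F R' S' :=
  fCentralSection_iff_of_surjective hF hπ hR.le (hR.ge.trans le_sup_left)
    (by rw [← hS, Subgroup.comap_map_eq, sup_eq_left.mpr hker])

end NormalSection

section ChiefFactor

variable {G G' : Type} [Group G] [Group G']

theorem Subgroup.inf_sup_le_of_normal {A B C : Subgroup G} [B.Normal] (h : C ≤ A) :
    A ⊓ (B ⊔ C) ≤ A ⊓ B ⊔ C := by
  rintro x ⟨hxA, hx⟩
  obtain ⟨b, hb, c, hc, rfl⟩ := Subgroup.mem_sup_of_normal_left.mp hx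
  exact Subgroup.mul_mem_sup ⟨(Subgroup.mul_mem_cancel_right _ (h hc)).mp hxA, hb⟩ hc

theorem IsChiefFactor.inf_of_sup {A B : Subgroup G} [A.Normal] [B.Normal]
    (h : IsChiefFactor (A ⊔ B) B) : IsChiefFactor A (A ⊓ B) := by
  obtain ⟨-, -, hlt, hmin⟩ := h
  refine ⟨‹_›, inferInstance, inf_le_left.lt_of_ne fun hAB => hlt.ne' ?_, fun L hL hBL hLA => ?_⟩
  · exact sup_eq_right.mpr (inf_eq_left.mp hAB)
  rcases hmin (L ⊔ B) inferInstance le_sup_right (sup_le_sup_right hLA B) with hc | hc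
  · exact .inl (le_antisymm (le_inf hLA (hc ▸ le_sup_left)) hBL)
  · refine .inr (le_antisymm hLA ?_)
    calc A ≤ A ⊓ (B ⊔ L) := le_inf le_rfl (by rw [sup_comm, hc]; exact le_sup_left)
      _ ≤ A ⊓ B ⊔ L := Subgroup.inf_sup_le_of_normal hLA
      _ = L := sup_eq_right.mpr hBL

theorem IsChiefFactor.sup {H K M : Subgroup G} [M.Normal] (h : IsChiefFactor H K)
    (hHM : H ⊓ M ≤ K) : IsChiefFactor (H ⊔ M) (K ⊔ M) := by
  obtain ⟨hH, hK, hlt, hmin⟩ := h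
  refine ⟨inferInstance, inferInstance, (sup_le_sup_right hlt.le M).lt_of_ne fun hKM => ?_,
    fun L hL hKL hLH => ?_⟩
  · refine hlt.not_ge ?_
    calc H ≤ H ⊓ (M ⊔ K) := le_inf le_rfl (by rw [sup_comm, hKM]; exact le_sup_left)
      _ ≤ H ⊓ M ⊔ K := Subgroup.inf_sup_le_of_normal hlt.le
      _ = K := sup_eq_right.mpr hHM
  have hML : M ≤ L := le_sup_right.trans hKL
  rcases hmin (L ⊓ H) inferInstance (le_inf (le_sup_left.trans hKL) hlt.le) inf_le_right
    with hc | hc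
  · refine .inl (le_antisymm ?_ hKL)
    calc L ≤ L ⊓ (H ⊔ M) := le_inf le_rfl hLH
      _ ≤ L ⊓ H ⊔ M := Subgroup.inf_sup_le_of_normal hML
      _ = K ⊔ M := by rw [hc]
  · exact .inr (le_antisymm hLH (sup_le (hc ▸ inf_le_left) hML))

theorem isChiefFactor_comap_iff {π : G →* G'} (hπ : Function.Surjective π) {H K : Subgroup G'} :
    IsChiefFactor (H.comap π) (K.comap π) ↔ IsChiefFactor H K := by
  refine ⟨fun ⟨hH, hK, hlt, hmin⟩ => ⟨?_, ?_, ?_, fun L hL hKL hLH => ?_⟩,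
    fun ⟨hH, hK, hlt, hmin⟩ => ⟨hH.comap π, hK.comap π, ?_, fun L hL hKL hLH => ?_⟩⟩
  · simpa only [Subgroup.map_comap_eq_self_of_surjective hπ] using hH.map π hπ
  · simpa only [Subgroup.map_comap_eq_self_of_surjective hπ] using hK.map π hπ
  · exact (Subgroup.comap_lt_comap_of_surjective hπ).mp hlt
  · simpa only [(Subgroup.comap_injective hπ).eq_iff] using
      hmin (L.comap π) (hL.comap π) (Subgroup.comap_mono hKL) (Subgroup.comap_mono hLH)
  · exact (Subgroup.comap_lt_comap_of_surjective hπ).mpr hlt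
  have hker : π.ker ≤ L := (π.ker_le_comap K).trans hKL
  rcases hmin (L.map π) (hL.map π hπ) (Subgroup.map_comap_eq_self_of_surjective hπ K ▸
    Subgroup.map_mono hKL) (Subgroup.map_le_iff_le_comap.mpr hLH) with hc | hc
  · exact .inl (le_antisymm (Subgroup.map_le_iff_le_comap.mp hc.le) hKL)
  · refine .inr (le_antisymm hLH ?_)
    rw [← hc, Subgroup.comap_map_eq, sup_eq_left.mpr hker]

theorem IsChiefFactor.map {π : G →* G'} (hπ : Function.Surjective π) {H K : Subgroup G}
    (h : IsChiefFactor H K) (hker : π.ker ≤ K) : IsChiefFactor (H.map π) (K.map π) := by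
  rwa [← isChiefFactor_comap_iff hπ, Subgroup.comap_map_eq, Subgroup.comap_map_eq,
    sup_eq_left.mpr hker, sup_eq_left.mpr (hker.trans h.2.2.1.le)]

theorem IsChiefFactor.inf_sup_eq_or_inf_le {H K : Subgroup G} (h : IsChiefFactor H K)
    (M : Subgroup G) [M.Normal] : H ⊓ M ⊔ K = H ∨ H ⊓ M ≤ K := by
  have := h.1
  have := h.2.1
  rcases h.2.2.2 (H ⊓ M ⊔ K) inferInstance le_sup_right (sup_le inf_le_left h.2.2.1.le)
    with hc | hc
  · exact .inr (hc ▸ le_sup_left)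
  · exact .inl hc

end ChiefFactor

section Hypercentre

variable {F : GroupClass} {G G' : Type} [Group G] [Finite G] [Group G'] [Finite G']

theorem fHypercentralIn_bot : FHypercentralIn F (⊥ : Subgroup G) :=
  ⟨inferInstance, fun _ _ hcf hH => absurd (hcf.2.2.1.trans_le hH) not_lt_bot⟩

theorem FHypercentralIn.mono {M M' : Subgroup G} [M.Normal] (hM' : FHypercentralIn F M')
    (h : M ≤ M') : FHypercentralIn F M :=
  ⟨‹_›, fun H K hcf hH => hM'.2 H K hcf (hH.trans h)⟩

theorem IsChiefFactor.fCentralSection_of_inf_sup_eq (hF : F.IsFormation) {H K M : Subgroup G}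
    [H.Normal] [K.Normal] (hcf : IsChiefFactor H K) (hM : FHypercentralIn F M)
    (hsup : H ⊓ M ⊔ K = H) : FCentralSection F H K := by
  have := hM.1
  have hchief : IsChiefFactor (H ⊓ M) (H ⊓ M ⊓ K) := (hsup ▸ hcf).inf_of_sup
  exact (fCentralSection_iff_of_sup_eq_of_inf_eq hF hsup rfl).mp
    (hM.2 _ _ hchief inf_le_right)

theorem IsChiefFactor.fCentralSection_of_inf_le (hF : F.IsFormation) {H K N : Subgroup G}
    [H.Normal] [K.Normal] [N.Normal] (hcf : IsChiefFactor H K) (hHN : H ⊓ N ≤ K)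
    {Z : Subgroup (G ⧸ N)} (hZ : FHypercentralIn F Z)
    (hle : (H ⊔ N).map (QuotientGroup.mk' N) ≤ Z) : FCentralSection F H K := by
  have hker : (QuotientGroup.mk' N).ker ≤ K ⊔ N := (QuotientGroup.ker_mk' N).trans_le le_sup_right
  have hchief := (hcf.sup hHN).map (QuotientGroup.mk'_surjective N) hker
  have hcentral : FCentralSection F (H ⊔ N) (K ⊔ N) :=
    (fCentralSection_iff_of_map_eq hF (QuotientGroup.mk'_surjective N) rfl rfl hker).mpr
      (hZ.2 _ _ hchief hle)
  have hKH : K ≤ H := hcf.2.2.1.le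
  refine (fCentralSection_iff_of_sup_eq_of_inf_eq hF (B := K ⊔ N)
    (by rw [← sup_assoc, sup_eq_left.mpr hKH]) (le_antisymm ?_ (le_inf hKH le_sup_left))).mpr
    hcentral
  calc H ⊓ (K ⊔ N) = H ⊓ (N ⊔ K) := by rw [sup_comm]
    _ ≤ H ⊓ N ⊔ K := Subgroup.inf_sup_le_of_normal hKH
    _ = K := sup_eq_right.mpr hHN

theorem FHypercentralIn.comap_mk' (hF : F.IsFormation) {M : Subgroup G} [M.Normal]
    (hM : FHypercentralIn F M) {Z : Subgroup (G ⧸ M)} (hZ : FHypercentralIn F Z) :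
    FHypercentralIn F (Z.comap (QuotientGroup.mk' M)) := by
  have := hZ.1
  refine ⟨inferInstance, fun H K hcf hH => ?_⟩
  have := hcf.1
  have := hcf.2.1
  rcases hcf.inf_sup_eq_or_inf_le M with hsup | hinf
  · exact hcf.fCentralSection_of_inf_sup_eq hF hM hsup
  · refine hcf.fCentralSection_of_inf_le hF hinf hZ (Subgroup.map_le_iff_le_comap.mpr ?_)
    refine sup_le hH ?_
    simpa only [QuotientGroup.ker_mk'] using (QuotientGroup.mk' M).ker_le_comap Z

theorem FHypercentralIn.map (hF : F.IsFormation) {π : G →* G'} (hπ : Function.Surjective π)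
    {M : Subgroup G} (hM : FHypercentralIn F M) : FHypercentralIn F (M.map π) := by
  have := hM.1
  refine ⟨this.map π hπ, fun H' K' hcf' hH' => ?_⟩
  have := hcf'.1
  have := hcf'.2.1
  have hcf := (isChiefFactor_comap_iff hπ).mpr hcf'
  have hker : π.ker ≤ K'.comap π := π.ker_le_comap K'
  have hsup : H'.comap π ⊓ M ⊔ K'.comap π = H'.comap π := by
    refine (hcf.inf_sup_eq_or_inf_le M).resolve_right fun hinf => hcf.2.2.1.not_ge ?_
    calc H'.comap π ≤ H'.comap π ⊓ (M ⊔ π.ker) :=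
          le_inf le_rfl (Subgroup.comap_map_eq π M ▸ Subgroup.comap_mono hH')
      _ ≤ H'.comap π ⊓ M ⊔ π.ker := Subgroup.inf_sup_le_of_normal (hker.trans hcf.2.2.1.le)
      _ ≤ K'.comap π := sup_le hinf hker
  exact (fCentralSection_iff_of_map_eq hF hπ (Subgroup.map_comap_eq_self_of_surjective hπ H')
    (Subgroup.map_comap_eq_self_of_surjective hπ K') hker).mp
    (hcf.fCentralSection_of_inf_sup_eq hF hM hsup)

theorem FHypercentralIn.sup (hF : F.IsFormation) {M₁ M₂ : Subgroup G}
    (h₁ : FHypercentralIn F M₁) (h₂ : FHypercentralIn F M₂) : FHypercentralIn F (M₁ ⊔ M₂) := by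
  have := h₁.1
  have h := h₁.comap_mk' hF (h₂.map hF (QuotientGroup.mk'_surjective M₁))
  rwa [Subgroup.comap_map_eq, QuotientGroup.ker_mk', sup_comm] at h

theorem le_fHypercentre {M : Subgroup G} (hM : FHypercentralIn F M) : M ≤ FHypercentre F G :=
  le_iSup₂ (f := fun (N : Subgroup G) (_ : FHypercentralIn F N) => N) M hM

theorem fHypercentralIn_fHypercentre (hF : F.IsFormation) :
    FHypercentralIn F (FHypercentre F G) :=
  SupClosed.biSup_mem (s := {M | FHypercentralIn F M}) (fun _ h₁ _ h₂ => h₁.sup hF h₂)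
    (Set.toFinite _) fHypercentralIn_bot fun _ h => h

end Hypercentre

theorem FHypercentre_quotient_general
    (F : GroupClass) (hF : F.IsFormation)
    {G : Type} [Group G] [Finite G] (N : Subgroup G) [N.Normal]
    (hN : N ≤ FHypercentre F G) :
    (FHypercentre F G).map (QuotientGroup.mk' N) = FHypercentre F (G ⧸ N) := by
  have hZ := fHypercentralIn_fHypercentre hF (G := G)
  refine le_antisymm (le_fHypercentre (hZ.map hF (QuotientGroup.mk'_surjective N))) ?_
  have hW := (hZ.mono hN).comap_mk' hF (fHypercentralIn_fHypercentre hF)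
  calc FHypercentre F (G ⧸ N)
      = ((FHypercentre F (G ⧸ N)).comap (QuotientGroup.mk' N)).map (QuotientGroup.mk' N) :=
        (Subgroup.map_comap_eq_self_of_surjective (QuotientGroup.mk'_surjective N) _).symm
    _ ≤ (FHypercentre F G).map (QuotientGroup.mk' N) := Subgroup.map_mono (le_fHypercentre hW)

/-- **Lemma 4(ii).** Let `𝔉` be a hereditary formation and `N` a normal subgroup of the
finite group `G` with `N ≤ Z_𝔉(G)`. Then `Z_𝔉(G)/N = Z_𝔉(G/N)`. -/
theorem FHypercentre_quotient
    (F : GroupClass) (hF : F.IsFormation) (hHer : F.Hereditary)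
    {G : Type} [Group G] [Finite G] (N : Subgroup G) [N.Normal]
    (hN : N ≤ FHypercentre F G) :
    (FHypercentre F G).map (QuotientGroup.mk' N) = FHypercentre F (G ⧸ N) :=
  FHypercentre_quotient_general F hF N hN
end
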